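/- The double star D₁₄ (two stars K_{1,6} with their centres joined, 14 vertices) satisfies Oχ(D₁₄) = 4. -/
import Mathlib


/-- `G` admits two orthogonal proper colourings, each using at most `k` colours:
two proper colourings such that no two distinct vertices receive the same pair of colours. -/
def HasOrthColoring {V : Type*} (G : SimpleGraph V) (k : ℕ) : Prop :=
  ∃ c₁ c₂ : V → Fin k,
    (∀ ⦃u v⦄, G.Adj u v → c₁ u ≠ c₁ v) ∧
    (∀ ⦃u v⦄, G.Adj u v → c₂ u ≠ c₂ v) ∧
    Function.Injective fun v => (c₁ v, c₂ v)

/-- The double star `D_m` with `m = 2 * (l + 1)` vertices: two centres `(0, none)` and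
`(1, none)` joined by an edge, each adjacent to its own `l = m/2 - 1` leaves. -/
def doubleStar (l : ℕ) : SimpleGraph (Fin 2 × Option (Fin l)) :=
  SimpleGraph.fromRel fun a b =>
    (a = (0, none) ∧ b = (1, none)) ∨
    (a.2 = none ∧ b.1 = a.1 ∧ b.2 ≠ none)

def dsF : Fin 2 × Option (Fin 6) → Fin 4 × Fin 4
  | (a, none) => if a = 0 then (0, 0) else (1, 1)
  | (a, some i) =>
      if a = 0 then ![((1:Fin 4),(2:Fin 4)),(1,3),(2,1),(3,1),(2,2),(3,3)] i
      else ![((0:Fin 4),(2:Fin 4)),(0,3),(2,0),(3,0),(2,3),(3,2)] i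

instance : DecidableRel (doubleStar 6).Adj := fun a b => by
  rw [doubleStar, SimpleGraph.fromRel_adj]; infer_instance

/-- The double star `D₁₄` (two stars `K_{1,6}` with their centres joined,
here `doubleStar 6`) satisfies `Oχ(D₁₄) = 4`. -/
theorem orthChromatic_doubleStar_fourteen :
    IsLeast {k | HasOrthColoring (doubleStar 6) k} 4 := by
  constructor
  · refine ⟨fun v => (dsF v).1, fun v => (dsF v).2, ?_, ?_, ?_⟩
    · decide
    · decide
    · decide
  · rintro k ⟨c₁, c₂, -, -, hinj⟩
    have h := Fintype.card_le_of_injective _ hinj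
    simp only [Fintype.card_prod, Fintype.card_fin, Fintype.card_option] at h
    nlinarith
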